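/- arXiv:2507.05827 — 6 statements merged into one kernel-verified Lean document; each statement's English description precedes it below -/
import Mathlib

section
/- Every graph G on n ≥ 2 vertices, with nonnegative edge weights, admits a bipartition (X,Y) of its vertex set such that the total weight of edges between X and Y is at least w(G)/2 + w(G)/(2n), where w(G) is the total weight of all edges. (Equivalently, the maximum cut has weight at least (1/2 + 1/(2n))·w(G); for even n the bound can be improved to (1/2 + 1/(2(n-1)))·w(G).) -/
open Finset

/-- Total weight of the graph: half the sum of `w u v` over ordered pairs. -/
noncomputable def totalW {V : Type} [Fintype V] (w : V → V → ℝ) : ℝ := (∑ u, ∑ v, w u v) / 2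

/-- Weight of the cut between `X` and `Y`. -/
noncomputable def cutW {V : Type} (w : V → V → ℝ) (X Y : Finset V) : ℝ := ∑ u ∈ X, ∑ v ∈ Y, w u v

/-- Weight of the edges inside `S`. -/
noncomputable def insideW {V : Type} (w : V → V → ℝ) (S : Finset V) : ℝ := (∑ u ∈ S, ∑ v ∈ S, w u v) / 2

/-- Weighted degree of a vertex. -/
noncomputable def wdeg {V : Type} [Fintype V] (w : V → V → ℝ) (v : V) : ℝ := ∑ u, w v u

/-- Maximum weighted degree. -/
noncomputable def maxDeg {V : Type} [Fintype V] (w : V → V → ℝ) : ℝ := ⨆ v, wdeg w v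

/-- Weight from `v` into the set `S`. -/
noncomputable def wS {V : Type} (w : V → V → ℝ) (S : Finset V) (v : V) : ℝ := ∑ x ∈ S, w v x

/-- Total cross-part weight of a `k`-partition. -/
noncomputable def kcutW {V : Type} (w : V → V → ℝ) {k : ℕ} (X : Fin k → Finset V) : ℝ :=
  (∑ i, ∑ j, if i = j then 0 else cutW w (X i) (X j)) / 2

/-- `X` is a partition of `V` into `k` nonempty pairwise disjoint parts. -/
def IsPartition {V : Type} {k : ℕ} (X : Fin k → Finset V) : Prop :=
  (∀ i, (X i).Nonempty) ∧ (∀ i j, i ≠ j → Disjoint (X i) (X j)) ∧ (∀ v, ∃ i, v ∈ X i)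

lemma nat_id_aux (n k : ℕ) (hk1 : 1 ≤ k) (hkn : k ≤ n - 1) (hn : 2 ≤ n) :
    k * (n - k) * n.choose k = n * (n - 1) * (n - 2).choose (k - 1) := by
  obtain ⟨m, rfl⟩ : ∃ m, n = m + 2 := ⟨n - 2, by omega⟩
  obtain ⟨j, rfl⟩ : ∃ j, k = j + 1 := ⟨k - 1, by omega⟩
  have hjm : j ≤ m := by omega
  have h1 : (j+1) * (m+2).choose (j+1) = (m+2) * (m+1).choose j := by
    have := Nat.add_one_mul_choose_eq (m+1) j
    linarith
  have h2 : (m + 1 - j) * (m+1).choose j = (m+1) * m.choose j := by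
    have hs : (m+1).choose j = (m+1).choose (m+1-j) := (Nat.choose_symm (by omega)).symm
    obtain ⟨i, hi⟩ : ∃ i, m - j = i := ⟨m - j, rfl⟩
    have hij : m + 1 - j = i + 1 := by omega
    have hmi : m.choose i = m.choose j := by rw [← hi]; exact Nat.choose_symm hjm
    have := Nat.add_one_mul_choose_eq m i
    rw [hs, hij, ← hmi]
    linarith
  simp only [show m + 2 - (j+1) = m + 1 - j by omega, show j + 1 - 1 = j by omega,
    show m + 2 - 1 = m + 1 by omega, show m + 2 - 2 = m by omega]
  calc (j+1) * (m+1-j) * (m+2).choose (j+1) = (m+1-j) * ((j+1) * (m+2).choose (j+1)) := by ring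
    _ = (m+1-j) * ((m+2) * (m+1).choose j) := by rw [h1]
    _ = (m+2) * ((m+1-j) * (m+1).choose j) := by ring
    _ = (m+2) * ((m+1) * m.choose j) := by rw [h2]
    _ = (m+2)*(m+1) * m.choose j := by ring

lemma count_lemma_aux {V : Type} [Fintype V] [DecidableEq V] (u v : V) (huv : u ≠ v)
    (k : ℕ) (hk : 1 ≤ k) :
    ((powersetCard k (univ : Finset V)).filter (fun X => u ∈ X ∧ v ∉ X)).card
      = (Fintype.card V - 2).choose (k - 1) := by
  have hcard : (((univ : Finset V).erase v).erase u).card = Fintype.card V - 2 := by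
    rw [card_erase_of_mem (by simp [huv]), card_erase_of_mem (by simp)]
    simp [Finset.card_univ]
    omega
  rw [← hcard, ← Finset.card_powersetCard]
  apply Finset.card_bij' (fun X _ => X.erase u) (fun Y _ => insert u Y)
  · intro X hX
    simp only [mem_filter] at hX
    exact Finset.insert_erase hX.2.1
  · intro Y hY
    rw [Finset.mem_powersetCard] at hY
    have huY : u ∉ Y := fun h => by simpa using (hY.1 h)
    exact Finset.erase_insert huY
  · intro X hX
    simp only [mem_filter, Finset.mem_powersetCard] at hX
    obtain ⟨⟨-, hXc⟩, hu, hv⟩ := hX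
    rw [Finset.mem_powersetCard]
    constructor
    · intro x hx
      simp only [Finset.mem_erase] at hx ⊢
      exact ⟨hx.1, fun h => hv (h ▸ hx.2), Finset.mem_univ _⟩
    · rw [Finset.card_erase_of_mem hu, hXc]
  · intro Y hY
    rw [Finset.mem_powersetCard] at hY
    obtain ⟨hYs, hYc⟩ := hY
    have huY : u ∉ Y := fun h => by simpa using (hYs h)
    simp only [mem_filter, Finset.mem_powersetCard]
    refine ⟨⟨Finset.subset_univ _, ?_⟩, Finset.mem_insert_self _ _, ?_⟩
    · rw [Finset.card_insert_of_notMem huY, hYc]; omega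
    · intro hv
      rcases Finset.mem_insert.mp hv with h | h
      · exact huv h.symm
      · have := hYs h; simp [huv.symm] at this

lemma cut_as_ite_aux {V : Type} [Fintype V] [DecidableEq V] (w : V → V → ℝ) (X : Finset V) :
    cutW w X Xᶜ = ∑ u, ∑ v, if u ∈ X ∧ v ∉ X then w u v else 0 := by
  have inner : ∀ u, (∑ v, if u ∈ X ∧ v ∉ X then w u v else 0)
      = if u ∈ X then ∑ v ∈ Xᶜ, w u v else 0 := by
    intro u
    by_cases h : u ∈ X
    · simp only [h, true_and, if_true]
      calc (∑ v, if v ∉ X then w u v else 0)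
          = ∑ v, if v ∈ Xᶜ then w u v else 0 := by simp [Finset.mem_compl]
        _ = ∑ v ∈ univ ∩ Xᶜ, w u v := Finset.sum_ite_mem _ _ _
        _ = ∑ v ∈ Xᶜ, w u v := by rw [univ_inter]
    · simp [h]
  rw [Finset.sum_congr rfl (fun u _ => inner u)]
  rw [Finset.sum_ite_mem, univ_inter]
  rfl

lemma swap_sum_aux {V : Type} [Fintype V] [DecidableEq V] (w : V → V → ℝ)
    (hdiag : ∀ v, w v v = 0) (k : ℕ) (hk : 1 ≤ k) :
    ∑ X ∈ powersetCard k (univ : Finset V), cutW w X Xᶜ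
      = (∑ u, ∑ v, w u v) * ((Fintype.card V - 2).choose (k - 1) : ℝ) := by
  calc ∑ X ∈ powersetCard k (univ : Finset V), cutW w X Xᶜ
      = ∑ X ∈ powersetCard k (univ : Finset V), ∑ u, ∑ v,
          if u ∈ X ∧ v ∉ X then w u v else 0 :=
        Finset.sum_congr rfl fun X _ => cut_as_ite_aux w X
    _ = ∑ u, ∑ v, ∑ X ∈ powersetCard k (univ : Finset V),
          (if u ∈ X ∧ v ∉ X then w u v else 0) := by
        rw [Finset.sum_comm]
        exact Finset.sum_congr rfl fun u _ => Finset.sum_comm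
    _ = ∑ u, ∑ v, (((powersetCard k (univ : Finset V)).filter
          (fun X => u ∈ X ∧ v ∉ X)).card : ℝ) * w u v := by
        refine Finset.sum_congr rfl fun u _ => Finset.sum_congr rfl fun v _ => ?_
        rw [← Finset.sum_filter, Finset.sum_const, nsmul_eq_mul]
    _ = ∑ u, ∑ v, w u v * ((Fintype.card V - 2).choose (k - 1) : ℝ) := by
        refine Finset.sum_congr rfl fun u _ => Finset.sum_congr rfl fun v _ => ?_
        by_cases huv : u = v
        · subst huv; simp [hdiag u]
        · rw [count_lemma_aux u v huv k hk, mul_comm]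
    _ = (∑ u, ∑ v, w u v) * ((Fintype.card V - 2).choose (k - 1) : ℝ) := by
        rw [Finset.sum_mul]
        exact Finset.sum_congr rfl fun u _ => by rw [Finset.sum_mul]

theorem stmt0 (V : Type) [Fintype V] [DecidableEq V] (w : V → V → ℝ)
    (hcard : 2 ≤ Fintype.card V)
    (hsym : ∀ u v, w u v = w v u) (hnn : ∀ u v, 0 ≤ w u v) (hdiag : ∀ v, w v v = 0) :
    ∃ X : Finset V, X.Nonempty ∧ Xᶜ.Nonempty ∧
      cutW w X Xᶜ ≥ totalW w / 2 + totalW w / (2 * (Fintype.card V : ℝ)) ∧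
      (Even (Fintype.card V) →
        cutW w X Xᶜ ≥ totalW w / 2 + totalW w / (2 * ((Fintype.card V : ℝ) - 1))) := by
  classical
  set n := Fintype.card V with hndef
  have hn2 : 2 ≤ n := hcard
  set k := (n + 1) / 2 with hkdef
  have hk1 : 1 ≤ k := by omega
  have hkn1 : k ≤ n - 1 := by omega
  have hkn : k ≤ n := by omega
  set S := powersetCard k (univ : Finset V) with hSdef
  have hScard : S.card = n.choose k := by
    rw [hSdef, Finset.card_powersetCard, Finset.card_univ]
  have hSne : S.Nonempty := by
    rw [← Finset.card_pos, hScard]; exact Nat.choose_pos hkn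
  set T := totalW w with hTdef
  have hT2 : (∑ u, ∑ v, w u v) = 2 * T := by rw [hTdef]; unfold totalW; ring
  have hTnn : 0 ≤ T := by
    rw [hTdef]; unfold totalW
    apply div_nonneg _ (by norm_num)
    exact Finset.sum_nonneg fun u _ => Finset.sum_nonneg fun v _ => hnn u v
  set c := n.choose k with hcdef
  set d := (n - 2).choose (k - 1) with hddef
  have hcpos : 0 < c := Nat.choose_pos hkn
  have hcR : (0:ℝ) < (c : ℝ) := by exact_mod_cast hcpos
  have hsum : ∑ X ∈ S, cutW w X Xᶜ = 2 * T * (d : ℝ) := by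
    rw [hSdef, swap_sum_aux w hdiag k hk1, hT2]
  have havg : ∃ X ∈ S, 2 * T * (d : ℝ) / (c : ℝ) ≤ cutW w X Xᶜ := by
    apply Finset.exists_le_of_sum_le hSne
    rw [Finset.sum_const, hScard, nsmul_eq_mul, hsum,
      mul_div_cancel₀ _ (ne_of_gt hcR)]
  obtain ⟨X, hXS, hXavg⟩ := havg
  rw [hSdef, Finset.mem_powersetCard] at hXS
  have hXcard : X.card = k := hXS.2
  have hXne : X.Nonempty := by rw [← Finset.card_pos, hXcard]; omega
  have hXcne : Xᶜ.Nonempty := by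
    rw [← Finset.card_pos, Finset.card_compl, hXcard, ← hndef]; omega
  -- real versions of basic facts
  have hnR : (2:ℝ) ≤ (n : ℝ) := by exact_mod_cast hn2
  have hnpos : (0:ℝ) < (n : ℝ) := by linarith
  have hn1pos : (0:ℝ) < (n : ℝ) - 1 := by linarith
  -- cast of the binomial identity
  have hid : (k : ℝ) * ((n : ℝ) - (k : ℝ)) * (c : ℝ)
      = (n : ℝ) * ((n : ℝ) - 1) * (d : ℝ) := by
    have h := nat_id_aux n k hk1 hkn1 hn2
    have h' : ((k * (n - k) * n.choose k : ℕ) : ℝ)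
        = ((n * (n - 1) * (n - 2).choose (k - 1) : ℕ) : ℝ) := by exact_mod_cast h
    push_cast [Nat.cast_sub hkn, Nat.cast_sub (show 1 ≤ n by omega)] at h'
    rw [← hcdef, ← hddef] at h'
    linarith
  have hdc : (d : ℝ) / (c : ℝ)
      = (k : ℝ) * ((n : ℝ) - (k : ℝ)) / ((n : ℝ) * ((n : ℝ) - 1)) := by
    rw [div_eq_div_iff hcR.ne' (by positivity : (0:ℝ) < (n:ℝ)*((n:ℝ)-1)).ne']
    linarith
  have hA : 2 * T * (d : ℝ) / (c : ℝ)
      = 2 * T * ((k : ℝ) * ((n : ℝ) - (k : ℝ))) / ((n : ℝ) * ((n : ℝ) - 1)) := by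
    rw [mul_div_assoc, hdc]
    field_simp
  rw [hA] at hXavg
  refine ⟨X, hXne, hXcne, ?_, ?_⟩
  · -- weak bound
    rcases Nat.even_or_odd n with he | ho
    · have h2k : 2 * k = n := by
        rw [Nat.even_iff] at he; omega
      have h2kR : 2 * (k : ℝ) = (n : ℝ) := by exact_mod_cast h2k
      have hkR : (k : ℝ) = (n : ℝ) / 2 := by linarith
      have hAe : 2 * T * ((k : ℝ) * ((n : ℝ) - (k : ℝ))) / ((n : ℝ) * ((n : ℝ) - 1))
          = T / 2 + T / (2 * ((n : ℝ) - 1)) := by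
        rw [hkR]; field_simp; ring
      have hmono : T / 2 + T / (2 * (n : ℝ)) ≤ T / 2 + T / (2 * ((n : ℝ) - 1)) := by
        gcongr <;> linarith
      rw [ge_iff_le]
      calc T / 2 + T / (2 * (n : ℝ)) ≤ T / 2 + T / (2 * ((n : ℝ) - 1)) := hmono
        _ = 2 * T * ((k : ℝ) * ((n : ℝ) - (k : ℝ))) / ((n : ℝ) * ((n : ℝ) - 1)) := hAe.symm
        _ ≤ cutW w X Xᶜ := hXavg
    · have h2k : 2 * k = n + 1 := by
        rw [Nat.odd_iff] at ho; omega
      have h2kR : 2 * (k : ℝ) = (n : ℝ) + 1 := by exact_mod_cast h2k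
      have hkR : (k : ℝ) = ((n : ℝ) + 1) / 2 := by linarith
      have hAo : 2 * T * ((k : ℝ) * ((n : ℝ) - (k : ℝ))) / ((n : ℝ) * ((n : ℝ) - 1))
          = T / 2 + T / (2 * (n : ℝ)) := by
        rw [hkR]
        field_simp
        ring
      rw [ge_iff_le, ← hAo]
      exact hXavg
  · -- strong bound for even n
    intro he
    have h2k : 2 * k = n := by
      rw [Nat.even_iff] at he; omega
    have h2kR : 2 * (k : ℝ) = (n : ℝ) := by exact_mod_cast h2k
    have hkR : (k : ℝ) = (n : ℝ) / 2 := by linarith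
    have hAe : 2 * T * ((k : ℝ) * ((n : ℝ) - (k : ℝ))) / ((n : ℝ) * ((n : ℝ) - 1))
        = T / 2 + T / (2 * ((n : ℝ) - 1)) := by
      rw [hkR]; field_simp; ring
    rw [ge_iff_le, ← hAe]
    exact hXavg
end

section
/- For any real number c > 0 there exists a weighted graph G such that every cut (X,Y) of G has weight strictly less than w(G)/2 + c·Δ_w(G). (Hence in the Edwards-type bound w(X,Y) ≥ w(G)/2 + d_w(G)/4, the average weighted degree cannot be replaced by any positive constant multiple of the maximum weighted degree.) -/
open Finset

/-! ### Auxiliary construction: `K_n` plus an apex joined by weight-`t` edges -/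

/-- The weight function: complete graph on the first `n` vertices with weight `1`,
plus an apex `Fin.last n` joined to everything with weight `t`. -/
noncomputable def Wapex (n : ℕ) (t : ℝ) (u v : Fin (n+1)) : ℝ :=
  if u = v then 0 else if u = Fin.last n ∨ v = Fin.last n then t else 1

lemma Wapex_rowsum (n : ℕ) (t : ℝ) (u : Fin (n+1)) :
    ∑ v, Wapex n t u v = if u = Fin.last n then n*t else n - 1 + t := by
  by_cases h : u = Fin.last n
  · subst h
    have : ∀ v : Fin (n+1), Wapex n t (Fin.last n) v
        = t - (if v = Fin.last n then t else 0) := by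
      intro v; by_cases hv : v = Fin.last n <;> simp [Wapex, hv, eq_comm]
    rw [Finset.sum_congr rfl fun v _ => this v, Finset.sum_sub_distrib,
      Finset.sum_const, Finset.sum_ite_eq' univ (Fin.last n) (fun _ => t)]
    simp; ring
  · have : ∀ v : Fin (n+1), Wapex n t u v =
        1 + (if v = Fin.last n then t - 1 else 0) - (if v = u then 1 else 0) := by
      intro v
      by_cases hv : v = Fin.last n
      · subst hv; simp [Wapex, h, Ne.symm h]
      · by_cases hu : v = u
        · subst hu; simp [Wapex, h, hv]
        · simp [Wapex, Ne.symm hu, h, hv, hu]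
    rw [Finset.sum_congr rfl fun v _ => this v, Finset.sum_sub_distrib,
      Finset.sum_add_distrib, Finset.sum_const,
      Finset.sum_ite_eq' univ (Fin.last n) (fun _ => t - 1),
      Finset.sum_ite_eq' univ u (fun _ => (1:ℝ))]
    simp [h]; ring

lemma Wapex_cutsum (n : ℕ) (t : ℝ) (X Y : Finset (Fin (n+1))) (hd : Disjoint X Y) :
    ∑ u ∈ X, ∑ v ∈ Y, Wapex n t u v =
      X.card * Y.card + (t-1) * (Y.card * (if Fin.last n ∈ X then 1 else 0)
        + X.card * (if Fin.last n ∈ Y then 1 else 0)) := by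
  have h1 : ∀ u ∈ X, ∀ v ∈ Y, Wapex n t u v =
      1 + (t-1)*((if u = Fin.last n then (1:ℝ) else 0) + (if v = Fin.last n then 1 else 0)) := by
    intro u hu v hv
    have huv : u ≠ v := fun h => (Finset.disjoint_left.mp hd hu) (h ▸ hv)
    by_cases h : u = Fin.last n <;> by_cases h' : v = Fin.last n <;>
      simp_all [Wapex]
  calc ∑ u ∈ X, ∑ v ∈ Y, Wapex n t u v
      = ∑ u ∈ X, ∑ v ∈ Y, (1 + (t-1)*((if u = Fin.last n then (1:ℝ) else 0)
          + (if v = Fin.last n then 1 else 0))) :=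
        Finset.sum_congr rfl fun u hu => Finset.sum_congr rfl fun v hv => h1 u hu v hv
    _ = _ := by
        simp only [Finset.sum_add_distrib, Finset.sum_const, Finset.mul_sum, Finset.sum_mul,
          mul_add, Finset.sum_ite_eq' X (Fin.last n), Finset.sum_ite_eq' Y (Fin.last n),
          nsmul_eq_mul, mul_one, mul_ite, mul_zero]
        by_cases hX : Fin.last n ∈ X <;> by_cases hY : Fin.last n ∈ Y <;> simp [hX, hY] <;> ring

lemma key_ineq (c N a b : ℝ) (hn : 1 < 4*c^2*N) (hb : 0 ≤ b) (hab : a + b = N) :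
    (a+1)*b + (2*c*N-1)*b < (N*(N-1) + 2*N*(2*c*N))/2/2 + c*(N*(2*c*N)) := by
  have hn0 : 0 < N := by nlinarith
  nlinarith [sq_nonneg (2*b - N - 2*c*N), mul_pos hn0 (show 0 < 4*c^2*N - 1 by linarith)]

theorem stmt2 (c : ℝ) (hc : 0 < c) :
    ∃ (n : ℕ) (w : Fin n → Fin n → ℝ), 0 < n ∧
      (∀ u v, w u v = w v u) ∧ (∀ u v, 0 ≤ w u v) ∧ (∀ v, w v v = 0) ∧
      ∀ X : Finset (Fin n), cutW w X Xᶜ < totalW w / 2 + c * maxDeg w := by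
  set n : ℕ := ⌈1/(4*c^2)⌉₊ + 1 with hn_def
  set t : ℝ := 2*c*n with ht_def
  have hc2 : 0 < 4*c^2 := by positivity
  have hn_big : 1 < 4*c^2*(n:ℝ) := by
    have h1 : 1/(4*c^2) < (n:ℝ) := by
      calc 1/(4*c^2) ≤ (⌈1/(4*c^2)⌉₊ : ℝ) := Nat.le_ceil _
        _ < (n:ℝ) := by rw [hn_def]; push_cast; linarith
    calc (1:ℝ) = 4*c^2 * (1/(4*c^2)) := by field_simp
      _ < 4*c^2 * (n:ℝ) := by gcongr
  have hn_pos : (0:ℝ) < n := by nlinarith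
  have ht_pos : 0 < t := by rw [ht_def]; positivity
  refine ⟨n+1, Wapex n t, Nat.succ_pos _, ?_, ?_, ?_, ?_⟩
  · intro u v
    by_cases h : u = v
    · simp [Wapex, h]
    · simp [Wapex, h, Ne.symm h, or_comm]
  · intro u v
    unfold Wapex
    split_ifs <;> [exact le_refl 0; exact ht_pos.le; exact zero_le_one]
  · intro v; simp [Wapex]
  · intro X
    -- total weight
    have htot : totalW (Wapex n t) = ((n:ℝ)*(n-1) + 2*n*t)/2 := by
      unfold totalW
      rw [Finset.sum_congr rfl fun u _ => Wapex_rowsum n t u]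
      have : ∀ u : Fin (n+1), (if u = Fin.last n then (n:ℝ)*t else n - 1 + t)
          = (n - 1 + t) + (if u = Fin.last n then n*t - (n-1+t) else 0) := by
        intro u; by_cases h : u = Fin.last n <;> simp [h]
      rw [Finset.sum_congr rfl fun u _ => this u, Finset.sum_add_distrib, Finset.sum_const,
        Finset.sum_ite_eq' univ (Fin.last n) (fun _ => (n:ℝ)*t - (n-1+t))]
      simp; push_cast; ring
    -- max degree
    have hmax : (n:ℝ)*t ≤ maxDeg (Wapex n t) := by
      have h1 : wdeg (Wapex n t) (Fin.last n) = (n:ℝ)*t := by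
        unfold wdeg; rw [Wapex_rowsum]; simp
      calc (n:ℝ)*t = wdeg (Wapex n t) (Fin.last n) := h1.symm
        _ ≤ maxDeg (Wapex n t) :=
          le_ciSup (Set.Finite.bddAbove (Set.finite_range _)) (Fin.last n)
    have hRHS : ((n:ℝ)*((n:ℝ)-1) + 2*(n:ℝ)*(2*c*(n:ℝ)))/2/2 + c*((n:ℝ)*(2*c*(n:ℝ)))
        ≤ totalW (Wapex n t) / 2 + c * maxDeg (Wapex n t) := by
      rw [htot, ← ht_def]
      have := mul_le_mul_of_nonneg_left hmax hc.le
      linarith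
    -- cut computation
    have hcut := Wapex_cutsum n t X Xᶜ disjoint_compl_right
    have hcard : (X.card : ℝ) + ((Xᶜ).card : ℝ) = (n:ℝ) + 1 := by
      have := Finset.card_add_card_compl X
      rw [Fintype.card_fin] at this
      exact_mod_cast this
    refine lt_of_lt_of_le ?_ hRHS
    unfold cutW
    rw [hcut]
    by_cases hX : Fin.last n ∈ X
    · have hX' : Fin.last n ∉ Xᶜ := by simp [hX]
      have hA : 1 ≤ (X.card : ℝ) := by
        have : 0 < X.card := Finset.card_pos.mpr ⟨_, hX⟩
        exact_mod_cast this
      have := key_ineq c n ((X.card : ℝ) - 1) ((Xᶜ).card : ℝ) hn_big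
        (by positivity) (by linarith)
      rw [← ht_def] at this ⊢
      simp only [hX, hX', if_true, if_false]
      calc (X.card:ℝ) * (Xᶜ).card + (t-1) * ((Xᶜ).card * 1 + (X.card:ℝ) * 0)
          = ((X.card:ℝ) - 1 + 1) * (Xᶜ).card + (t-1) * (Xᶜ).card := by ring
        _ < _ := this
    · have hX' : Fin.last n ∈ Xᶜ := by simp [hX]
      have hB : 1 ≤ ((Xᶜ).card : ℝ) := by
        have : 0 < (Xᶜ).card := Finset.card_pos.mpr ⟨_, hX'⟩
        exact_mod_cast this
      have := key_ineq c n (((Xᶜ).card : ℝ) - 1) ((X).card : ℝ) hn_big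
        (by positivity) (by linarith)
      rw [← ht_def] at this ⊢
      simp only [hX, hX', if_true, if_false]
      calc (X.card:ℝ) * (Xᶜ).card + (t-1) * ((Xᶜ).card * 0 + (X.card:ℝ) * 1)
          = (((Xᶜ).card:ℝ) - 1 + 1) * (X).card + (t-1) * (X).card := by ring
        _ < _ := this
end

section
/- For any real number c > 0 there exists a weighted graph G such that for every bipartition (X,Y) of its vertices, max{w(G[X]), w(G[Y])} > w(G)/4 + c·d_w(G). (Hence in the bound max{w(G[X]),w(G[Y])} ≤ w(G)/4 + Δ_w(G)/8, the maximum weighted degree cannot be replaced by any positive constant multiple of the average weighted degree.) -/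
open Finset

theorem stmt3 (c : ℝ) (hc : 0 < c) :
    ∃ (n : ℕ) (w : Fin n → Fin n → ℝ), 0 < n ∧
      (∀ u v, w u v = w v u) ∧ (∀ u v, 0 ≤ w u v) ∧ (∀ v, w v v = 0) ∧
      ∀ X : Finset (Fin n),
        max (insideW w X) (insideW w Xᶜ) > totalW w / 4 + c * (2 * totalW w / n) := by
  classical
  set n : ℕ := ⌈24 * c⌉₊ + 3 with hn
  have hnpos : 0 < n := by omega
  set f : Fin n → ℝ := fun u => if (u : ℕ) < 3 then 1 else 0 with hf
  set w : Fin n → Fin n → ℝ := fun u v => if u = v then 0 else f u * f v with hw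
  have hf01 : ∀ u, f u = 0 ∨ f u = 1 := by
    intro u; by_cases h : (u : ℕ) < 3 <;> simp [hf, h]
  have hfsq : ∀ u, f u * f u = f u := by
    intro u; rcases hf01 u with h | h <;> rw [h] <;> ring
  have hfnn : ∀ u, 0 ≤ f u := by
    intro u; rcases hf01 u with h | h <;> rw [h] <;> norm_num
  -- key identity for sums over any finset
  have key : ∀ S : Finset (Fin n),
      ∑ u ∈ S, ∑ v ∈ S, w u v = (∑ u ∈ S, f u) ^ 2 - ∑ u ∈ S, f u := by
    intro S
    have h1 : ∀ u ∈ S, ∑ v ∈ S, w u v = f u * (∑ v ∈ S, f v) - f u := by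
      intro u hu
      have h2 : ∑ v ∈ S, w u v
          = ∑ v ∈ S, (f u * f v - if u = v then f u * f v else 0) := by
        apply Finset.sum_congr rfl
        intro v hv
        by_cases h : u = v <;> simp [hw, h]
      rw [h2, Finset.sum_sub_distrib, Finset.sum_ite_eq S u (fun v => f u * f v), if_pos hu,
        ← Finset.mul_sum, hfsq u]
    rw [Finset.sum_congr rfl h1, Finset.sum_sub_distrib, ← Finset.sum_mul]
    ring
  have hsum : ∑ u : Fin n, f u = 3 := by
    rw [hf, Fin.sum_univ_eq_sum_range (fun i => if i < 3 then (1 : ℝ) else 0) n,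
      Finset.sum_boole]
    have h3 : ((Finset.range n).filter (fun i => i < 3)) = Finset.range 3 := by
      ext i
      simp only [Finset.mem_filter, Finset.mem_range]
      omega
    rw [h3, Finset.card_range]
    norm_num
  have hXa : ∀ X : Finset (Fin n),
      ∑ u ∈ X, f u = ((X.filter (fun u : Fin n => (u : ℕ) < 3)).card : ℝ) := by
    intro X
    rw [hf, Finset.sum_boole]
  have htot : totalW w = 3 := by
    rw [totalW, key Finset.univ, hsum]
    norm_num
  refine ⟨n, w, hnpos, ?_, ?_, ?_, ?_⟩
  · intro u v
    by_cases h : u = v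
    · simp [hw, h]
    · have h' : ¬ v = u := fun hh => h hh.symm
      simp only [hw, if_neg h, if_neg h']
      ring
  · intro u v
    by_cases h : u = v
    · simp [hw, h]
    · simp only [hw, if_neg h]
      exact mul_nonneg (hfnn u) (hfnn v)
  · intro v; simp [hw]
  · intro X
    set a : ℕ := (X.filter (fun u : Fin n => (u : ℕ) < 3)).card with ha
    set b : ℕ := (Xᶜ.filter (fun u : Fin n => (u : ℕ) < 3)).card with hb
    have hab : a + b = 3 := by
      have h1 : ((a : ℝ) + b) = 3 := by
        rw [ha, hb, ← hXa X, ← hXa Xᶜ, Finset.sum_add_sum_compl, hsum]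
      exact_mod_cast h1
    have hIX : insideW w X = ((a : ℝ) ^ 2 - a) / 2 := by
      rw [insideW, key X, hXa X]
    have hIXc : insideW w Xᶜ = ((b : ℝ) ^ 2 - b) / 2 := by
      rw [insideW, key Xᶜ, hXa Xᶜ]
    have hmax : (1 : ℝ) ≤ max (insideW w X) (insideW w Xᶜ) := by
      rw [hIX, hIXc, le_max_iff]
      clear_value a b
      have hb3 : b = 3 - a := by omega
      have ha3 : a ≤ 3 := by omega
      subst hb3
      interval_cases a <;> norm_num
    have hnc : (24 : ℝ) * c < n := by
      have h1 : (24 : ℝ) * c ≤ ⌈24 * c⌉₊ := Nat.le_ceil _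
      have h2 : ((n : ℝ)) = (⌈24 * c⌉₊ : ℝ) + 3 := by
        rw [hn]; push_cast; ring
      linarith
    have hnr : (0 : ℝ) < n := by exact_mod_cast hnpos
    have hlt : c * (2 * totalW w / n) < 1 / 4 := by
      rw [htot]
      have h1 : c * (2 * 3 / (n : ℝ)) = 6 * c / n := by ring
      rw [h1, div_lt_iff₀ hnr]
      nlinarith
    show totalW w / 4 + c * (2 * totalW w / n) < max (insideW w X) (insideW w Xᶜ)
    calc totalW w / 4 + c * (2 * totalW w / n) < 3 / 4 + 1 / 4 := by rw [htot] at hlt ⊢; linarith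
    _ = 1 := by norm_num
    _ ≤ max (insideW w X) (insideW w Xᶜ) := hmax
end

section
/- Every weighted graph G on n ≥ 3 vertices admits a partition of its vertex set into three nonempty parts (X₁, X₂, X₃) such that the total weight of edges between distinct parts satisfies w(X₁,X₂,X₃) ≥ (2/3)·w(G) + d_w(G)/3, where d_w(G) = 2w(G)/n. -/
open Finset

/-!
Fix a balanced partition, with part sizes `⌊n/3⌋`, `⌊(n+1)/3⌋`, `⌊(n+2)/3⌋`, and average its cut
weight over all relabellings of the vertices by permutations. As `Perm V` is 2-transitive, a
random relabelling sends two distinct vertices to a uniformly random ordered pair of distinct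
vertices, so every edge is cut with probability `P / C(n,2)`, where `P` is the number of pairs
split by the partition. Balancing gives `3P ≥ n² - 1`, so the average cut weight is at least
`2 w(G) (n+1) / (3n) = (2/3) w(G) + d_w(G) / 3`, and some relabelling attains the average.
-/

section PairAveraging

variable {G α M : Type*} [Group G] [MulAction G α] [AddCommMonoid M]

lemma MulAction.sum_smul_pair_eq_of_ne [Fintype G] [MulAction.IsMultiplyPretransitive G α 2]
    (f : α → α → M) {a b c d : α} (hab : a ≠ b) (hcd : c ≠ d) :
    ∑ g : G, f (g • a) (g • b) = ∑ g : G, f (g • c) (g • d) := by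
  obtain ⟨h, rfl, rfl⟩ := MulAction.is_two_pretransitive_iff.mp ‹_› hcd hab
  simp only [smul_smul]
  exact Fintype.sum_equiv (Equiv.mulRight h) _ _ fun _ => rfl

lemma MulAction.sum_sum_smul_smul [Fintype α] (f : α → α → M) (g : G) :
    ∑ x, ∑ y, f (g • x) (g • y) = ∑ x, ∑ y, f x y :=
  (sum_congr rfl fun x _ => Equiv.sum_comp (MulAction.toPerm g) (f (g • x))).trans
    (Equiv.sum_comp (MulAction.toPerm g) fun x => ∑ y, f x y)

lemma MulAction.card_mul_pred_nsmul_sum_smul_pair [Fintype G] [Fintype α] [DecidableEq α]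
    [MulAction.IsMultiplyPretransitive G α 2]
    (f : α → α → M) (hf : ∀ x, f x x = 0) {a b : α} (hab : a ≠ b) :
    (Fintype.card α * (Fintype.card α - 1)) • ∑ g : G, f (g • a) (g • b)
      = Fintype.card G • ∑ x, ∑ y, f x y := by
  have hrow : ∀ x, ∑ y, ∑ g : G, f (g • x) (g • y)
      = (Fintype.card α - 1) • ∑ g : G, f (g • a) (g • b) := fun x => by
    rw [← sum_erase (a := x) _ (by simp only [hf, sum_const_zero]),
      sum_congr rfl fun y hy => sum_smul_pair_eq_of_ne f (ne_of_mem_erase hy).symm hab,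
      sum_const, card_erase_of_mem (mem_univ x), card_univ]
  calc (Fintype.card α * (Fintype.card α - 1)) • ∑ g : G, f (g • a) (g • b)
      = ∑ x, ∑ y, ∑ g : G, f (g • x) (g • y) := by
        simp only [hrow, sum_const, card_univ, mul_nsmul']
    _ = ∑ g : G, ∑ x, ∑ y, f (g • x) (g • y) :=
        (sum_congr rfl fun _ _ => sum_comm).trans sum_comm
    _ = Fintype.card G • ∑ x, ∑ y, f x y := by
        simp only [sum_sum_smul_smul, sum_const, card_univ]

end PairAveraging

lemma add_add_mul_self_le_of_le_of_le_succ {a b c : ℕ} (hab : a ≤ b) (hbc : b ≤ c)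
    (hca : c ≤ a + 1) : (a + b + c) * (a + b + c) ≤ 3 * (a * b + a * c + b * c) + 1 := by
  nlinarith

section Partition

variable {V : Type} [Fintype V] [DecidableEq V]

lemma exists_three_partition_card {a b c : ℕ} (h : a + b + c = Fintype.card V) :
    ∃ A B C : Finset V, #A = a ∧ #B = b ∧ #C = c ∧
      Disjoint A B ∧ Disjoint A C ∧ Disjoint B C ∧ A ∪ B ∪ C = univ := by
  obtain ⟨A, -, hA⟩ := exists_subset_card_eq (s := (univ : Finset V)) (n := a)
    (by simp only [card_univ]; omega)
  obtain ⟨B, hBA, hB⟩ := exists_subset_card_eq (s := Aᶜ) (n := b) (by rw [card_compl]; omega)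
  have hAB : Disjoint A B := subset_compl_iff_disjoint_left.mp hBA
  refine ⟨A, B, (A ∪ B)ᶜ, hA, hB, ?_, hAB, ?_, ?_, union_compl _⟩
  · rw [card_compl, card_union_of_disjoint hAB]
    omega
  · exact disjoint_compl_right.mono_left subset_union_left
  · exact disjoint_compl_right.mono_left subset_union_right

lemma exists_balanced_three_partition (hcard : 3 ≤ Fintype.card V) :
    ∃ A B C : Finset V, A.Nonempty ∧ B.Nonempty ∧ C.Nonempty ∧
      Disjoint A B ∧ Disjoint A C ∧ Disjoint B C ∧ A ∪ B ∪ C = univ ∧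
      Fintype.card V * Fintype.card V ≤ 3 * (#A * #B + #A * #C + #B * #C) + 1 := by
  obtain ⟨A, B, C, hA, hB, hC, hAB, hAC, hBC, hABC⟩ := exists_three_partition_card (V := V)
    (a := Fintype.card V / 3) (b := (Fintype.card V + 1) / 3) (c := (Fintype.card V + 2) / 3)
    (by omega)
  refine ⟨A, B, C, card_pos.mp (by omega), card_pos.mp (by omega), card_pos.mp (by omega),
    hAB, hAC, hBC, hABC, ?_⟩
  have hbal := add_add_mul_self_le_of_le_of_le_succ (a := #A) (b := #B) (c := #C)
    (by omega) (by omega) (by omega)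
  rwa [show #A + #B + #C = Fintype.card V by omega] at hbal

end Partition

section RandomRelabelling

variable {V : Type} [Fintype V] [DecidableEq V]

lemma sum_perm_cutW_map (w : V → V → ℝ) (hdiag : ∀ v, w v v = 0) {A B : Finset V}
    (hAB : Disjoint A B) :
    ((Fintype.card V * (Fintype.card V - 1) : ℕ) : ℝ) *
        ∑ σ : Equiv.Perm V, cutW w (A.map σ.toEmbedding) (B.map σ.toEmbedding)
      = (Fintype.card V).factorial * (#A * #B) * ∑ x, ∑ y, w x y := by
  have hpair : ∀ u ∈ A, ∀ v ∈ B,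
      ((Fintype.card V * (Fintype.card V - 1) : ℕ) : ℝ) * ∑ σ : Equiv.Perm V, w (σ u) (σ v)
        = (Fintype.card V).factorial * ∑ x, ∑ y, w x y := fun u hu v hv => by
    have := Equiv.Perm.isMultiplyPretransitive V 2
    have := MulAction.card_mul_pred_nsmul_sum_smul_pair (G := Equiv.Perm V) w hdiag
      (disjoint_iff_ne.mp hAB u hu v hv)
    simpa only [nsmul_eq_mul, Fintype.card_perm, Equiv.Perm.smul_def] using this
  calc ((Fintype.card V * (Fintype.card V - 1) : ℕ) : ℝ) *
        ∑ σ : Equiv.Perm V, cutW w (A.map σ.toEmbedding) (B.map σ.toEmbedding)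
      = ∑ u ∈ A, ∑ v ∈ B, ((Fintype.card V * (Fintype.card V - 1) : ℕ) : ℝ) *
          ∑ σ : Equiv.Perm V, w (σ u) (σ v) := by
        simp only [cutW, sum_map, Equiv.coe_toEmbedding, mul_sum]
        exact sum_comm.trans (sum_congr rfl fun _ _ => sum_comm)
    _ = (Fintype.card V).factorial * (#A * #B) * ∑ x, ∑ y, w x y := by
        rw [sum_congr rfl fun u hu => sum_congr rfl (hpair u hu)]
        simp only [sum_const, nsmul_eq_mul]
        ring

lemma exists_perm_cutW_map_ge (w : V → V → ℝ) (hnn : ∀ u v, 0 ≤ w u v)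
    (hdiag : ∀ v, w v v = 0) (hcard : 2 ≤ Fintype.card V) {A B C : Finset V}
    (hAB : Disjoint A B) (hAC : Disjoint A C) (hBC : Disjoint B C)
    (hbal : Fintype.card V * Fintype.card V ≤ 3 * (#A * #B + #A * #C + #B * #C) + 1) :
    ∃ σ : Equiv.Perm V, 2 / 3 * totalW w + (2 * totalW w / (Fintype.card V : ℝ)) / 3 ≤
      cutW w (A.map σ.toEmbedding) (B.map σ.toEmbedding)
        + cutW w (A.map σ.toEmbedding) (C.map σ.toEmbedding)
        + cutW w (B.map σ.toEmbedding) (C.map σ.toEmbedding) := by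
  set T := ∑ x, ∑ y, w x y
  have hT : 0 ≤ T := sum_nonneg fun x _ => sum_nonneg fun y _ => hnn x y
  have hpos : (0 : ℝ) < ((Fintype.card V * (Fintype.card V - 1) : ℕ) : ℝ) := by
    have : 0 < Fintype.card V * (Fintype.card V - 1) := Nat.mul_pos (by omega) (by omega)
    exact_mod_cast this
  have hsum : ((Fintype.card V * (Fintype.card V - 1) : ℕ) : ℝ) * ∑ σ : Equiv.Perm V,
      (cutW w (A.map σ.toEmbedding) (B.map σ.toEmbedding)
        + cutW w (A.map σ.toEmbedding) (C.map σ.toEmbedding)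
        + cutW w (B.map σ.toEmbedding) (C.map σ.toEmbedding))
      = (Fintype.card V).factorial * (#A * #B + #A * #C + #B * #C) * T := by
    simp only [sum_add_distrib, mul_add, sum_perm_cutW_map w hdiag hAB,
      sum_perm_cutW_map w hdiag hAC, sum_perm_cutW_map w hdiag hBC]
    ring
  refine exists_le_of_sum_le univ_nonempty ?_ |>.imp fun _ => And.right
  rw [← mul_le_mul_iff_of_pos_left hpos, hsum, sum_const, card_univ, Fintype.card_perm,
    nsmul_eq_mul, show totalW w = T / 2 from rfl]
  push_cast [Nat.cast_sub (by omega : 1 ≤ Fintype.card V)]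
  field_simp
  have hbal' : (Fintype.card V : ℝ) * Fintype.card V
      ≤ 3 * ((#A : ℝ) * #B + #A * #C + #B * #C) + 1 := by exact_mod_cast hbal
  nlinarith [mul_le_mul_of_nonneg_left hbal' hT]

end RandomRelabelling

theorem stmt4_general (V : Type) [Fintype V] [DecidableEq V] (w : V → V → ℝ)
    (hcard : 3 ≤ Fintype.card V)
    (hnn : ∀ u v, 0 ≤ w u v) (hdiag : ∀ v, w v v = 0) :
    ∃ X₁ X₂ X₃ : Finset V, X₁.Nonempty ∧ X₂.Nonempty ∧ X₃.Nonempty ∧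
      Disjoint X₁ X₂ ∧ Disjoint X₁ X₃ ∧ Disjoint X₂ X₃ ∧ X₁ ∪ X₂ ∪ X₃ = Finset.univ ∧
      cutW w X₁ X₂ + cutW w X₁ X₃ + cutW w X₂ X₃ ≥
        2 / 3 * totalW w + (2 * totalW w / (Fintype.card V : ℝ)) / 3 := by
  obtain ⟨A, B, C, hA, hB, hC, hAB, hAC, hBC, hABC, hbal⟩ :=
    exists_balanced_three_partition hcard
  obtain ⟨σ, hσ⟩ := exists_perm_cutW_map_ge w hnn hdiag (by omega) hAB hAC hBC hbal
  refine ⟨A.map σ.toEmbedding, B.map σ.toEmbedding, C.map σ.toEmbedding, hA.map, hB.map, hC.map,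
    (disjoint_map _).mpr hAB, (disjoint_map _).mpr hAC, (disjoint_map _).mpr hBC, ?_, hσ⟩
  rw [← map_union, ← map_union, hABC, map_univ_equiv]

theorem stmt4 (V : Type) [Fintype V] [DecidableEq V] (w : V → V → ℝ)
    (hcard : 3 ≤ Fintype.card V)
    (hsym : ∀ u v, w u v = w v u) (hnn : ∀ u v, 0 ≤ w u v) (hdiag : ∀ v, w v v = 0) :
    ∃ X₁ X₂ X₃ : Finset V, X₁.Nonempty ∧ X₂.Nonempty ∧ X₃.Nonempty ∧
      Disjoint X₁ X₂ ∧ Disjoint X₁ X₃ ∧ Disjoint X₂ X₃ ∧ X₁ ∪ X₂ ∪ X₃ = Finset.univ ∧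
      cutW w X₁ X₂ + cutW w X₁ X₃ + cutW w X₂ X₃ ≥
        2 / 3 * totalW w + (2 * totalW w / (Fintype.card V : ℝ)) / 3 :=
  stmt4_general V w hcard hnn hdiag
end

section
/- For every integer q ≥ 1 the complete graph K_{3q+1} with all edge weights 1 shows that the judicious 3-partition bounds are tight: the optimal 3-partition (X₁,X₂,X₃) with |X₁|=|X₂|=q and |X₃|=q+1 satisfies w(X₁,X₂,X₃) = (2/3)·w(G) + d_w(G)/3 and max_i w(G[X_i]) = w(G)/9 + Δ_w(G)/9, where w(G) = binom(3q+1,2), Δ_w(G) = d_w(G) = 3q, and w(G[X₃]) = binom(q+1,2). -/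
open Finset

lemma key {n : ℕ} (w : Fin n → Fin n → ℝ)
    (hw : ∀ u v, w u v = if u = v then 0 else 1) (X Y : Finset (Fin n)) :
    ∑ u ∈ X, ∑ v ∈ Y, w u v = X.card * Y.card - (X ∩ Y).card := by
  have h1 : ∀ u, ∑ v ∈ Y, w u v = Y.card - (if u ∈ Y then (1:ℝ) else 0) := by
    intro u
    have : ∀ v ∈ Y, w u v = 1 - (if u = v then (1:ℝ) else 0) := by
      intro v _; rw [hw]; split <;> simp
    rw [Finset.sum_congr rfl this, Finset.sum_sub_distrib, Finset.sum_ite_eq, Finset.sum_const]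
    simp
  rw [Finset.sum_congr rfl (fun u _ => h1 u), Finset.sum_sub_distrib, Finset.sum_const]
  have : ∑ u ∈ X, (if u ∈ Y then (1:ℝ) else 0) = (X ∩ Y).card := by
    rw [Finset.sum_ite_mem, Finset.sum_const]; simp
  rw [this]; ring

theorem stmt6 (q : ℕ) (hq : 1 ≤ q)
    (w : Fin (3 * q + 1) → Fin (3 * q + 1) → ℝ)
    (hw : ∀ u v, w u v = if u = v then 0 else 1)
    (X₁ X₂ X₃ : Finset (Fin (3 * q + 1)))
    (h12 : Disjoint X₁ X₂) (h13 : Disjoint X₁ X₃) (h23 : Disjoint X₂ X₃)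
    (hu : X₁ ∪ X₂ ∪ X₃ = Finset.univ)
    (hc1 : X₁.card = q) (hc2 : X₂.card = q) (hc3 : X₃.card = q + 1) :
    totalW w = (3 * (q : ℝ) + 1) * (3 * q) / 2 ∧
    maxDeg w = 3 * (q : ℝ) ∧
    insideW w X₃ = ((q : ℝ) + 1) * q / 2 ∧
    cutW w X₁ X₂ + cutW w X₁ X₃ + cutW w X₂ X₃ =
      2 / 3 * totalW w + (2 * totalW w / (3 * (q : ℝ) + 1)) / 3 ∧
    max (insideW w X₁) (max (insideW w X₂) (insideW w X₃)) =
      totalW w / 9 + maxDeg w / 9 := by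
  have hcard : ((Finset.univ : Finset (Fin (3 * q + 1))).card : ℝ) = 3 * q + 1 := by
    rw [Finset.card_univ, Fintype.card_fin]; push_cast; ring
  have htot : totalW w = (3 * (q : ℝ) + 1) * (3 * q) / 2 := by
    unfold totalW
    rw [key w hw Finset.univ Finset.univ]
    rw [Finset.univ_inter, hcard]
    ring
  have hdeg : ∀ v, wdeg w v = 3 * (q : ℝ) := by
    intro v
    unfold wdeg
    have : ∑ u, w v u = ∑ u ∈ ({v} : Finset _), ∑ x ∈ Finset.univ, w u x := by simp
    rw [this, key w hw]
    simp [hcard]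
  have hmax : maxDeg w = 3 * (q : ℝ) := by
    unfold maxDeg
    rw [show (fun v => wdeg w v) = fun _ => 3 * (q : ℝ) from funext hdeg]
    exact ciSup_const
  have hin : ∀ S : Finset (Fin (3 * q + 1)), insideW w S = ((S.card : ℝ) ^ 2 - S.card) / 2 := by
    intro S
    unfold insideW
    rw [key w hw S S, Finset.inter_self]
    ring
  have hcut : ∀ X Y : Finset (Fin (3 * q + 1)), Disjoint X Y →
      cutW w X Y = (X.card : ℝ) * Y.card := by
    intro X Y h
    unfold cutW
    rw [key w hw X Y, Finset.disjoint_iff_inter_eq_empty.mp h]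
    simp
  have h3 : insideW w X₃ = ((q : ℝ) + 1) * q / 2 := by
    rw [hin, hc3]; push_cast; ring
  refine ⟨htot, hmax, h3, ?_, ?_⟩
  · rw [hcut _ _ h12, hcut _ _ h13, hcut _ _ h23, htot, hc1, hc2, hc3]
    push_cast
    have : (3 * (q : ℝ) + 1) ≠ 0 := by positivity
    field_simp
    ring
  · rw [hin X₁, hin X₂, h3, hc1, hc2, htot, hmax]
    have hqr : (1:ℝ) ≤ q := Nat.one_le_cast.mpr hq
    have hBC : max (((q:ℝ)^2 - q)/2) (((q:ℝ)+1)*q/2) = ((q:ℝ)+1)*q/2 :=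
      max_eq_right (by nlinarith)
    rw [hBC, max_eq_right (by nlinarith)]
    ring
end

section
/- Let k be even. Every weighted graph G of order n ≥ k admits a k-partition (X₁,…,X_k) with w(X₁,…,X_k) ≥ ((k−1)/k)·w(G) + ((k−1)/(2k))·(1 − (k−2)²/(4(n−1)(k−1)))·d_w(G). -/
open Finset

/-! Colour the vertices with a balanced `k`-colouring `c` (colour classes of sizes `⌊n/k⌋` and
`⌊n/k⌋ + 1`) and average the cut of the colour classes of `c ∘ σ` over all permutations `σ`.
Since permutations act transitively on ordered pairs of distinct vertices, every edge is cut
with the same frequency `T / (n (n - 1))`, where `T` counts the ordered pairs of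
differently coloured vertices; so some `σ` cuts at least `w(G) T / (n (n - 1))`. Balance gives
`T ≥ (1 - 1/k) n² - k/4`, and the claimed bound is exactly
`w(G) ((1 - 1/k) n² - k/4) / (n (n - 1))`. -/

open Equiv

lemma Equiv.Perm.exists_apply_eq_and_apply_eq {V : Type*} [DecidableEq V] {u v u' v' : V}
    (huv : u ≠ v) (huv' : u' ≠ v') : ∃ τ : Perm V, τ u' = u ∧ τ v' = v := by
  set τ₁ := swap u' u
  have hu : u ≠ τ₁ v' := by
    rw [← swap_apply_left u' u]
    exact τ₁.injective.ne huv'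
  exact ⟨swap (τ₁ v') v * τ₁, by simp [τ₁, swap_apply_of_ne_of_ne hu huv], by simp [τ₁]⟩

lemma Equiv.Perm.sum_apply_pair_eq {V M : Type*} [Fintype V] [DecidableEq V] [AddCommMonoid M]
    (F : V → V → M) {u v u' v' : V} (huv : u ≠ v) (huv' : u' ≠ v') :
    ∑ σ : Perm V, F (σ u) (σ v) = ∑ σ : Perm V, F (σ u') (σ v') := by
  obtain ⟨τ, hτu, hτv⟩ := Perm.exists_apply_eq_and_apply_eq huv huv'
  simpa [hτu, hτv] using Equiv.sum_comp (Equiv.mulRight τ) (fun σ => F (σ u') (σ v'))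

section Averaging

variable {V : Type*} [Fintype V] [DecidableEq V] (w F : V → V → ℝ)

lemma card_mul_sum_perm_sum_mul (hw : ∀ v, w v v = 0) (hF : ∀ v, F v v = 0)
    (hV : 1 < Fintype.card V) :
    (Fintype.card V * (Fintype.card V - 1)) * ∑ σ : Perm V, ∑ u, ∑ v, w u v * F (σ u) (σ v)
      = Fintype.card (Perm V) * (∑ u, ∑ v, w u v) * ∑ x, ∑ y, F x y := by
  obtain ⟨u₀, v₀, huv₀⟩ := Fintype.exists_pair_of_one_lt_card hV
  set M := ∑ σ : Perm V, F (σ u₀) (σ v₀)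
  have hpair : ∀ u v, ∑ σ : Perm V, F (σ u) (σ v) = if u = v then 0 else M := by
    intro u v
    split_ifs with huv
    · simp [huv, hF]
    · exact Perm.sum_apply_pair_eq F huv huv₀
  have hweighted : ∑ σ : Perm V, ∑ u, ∑ v, w u v * F (σ u) (σ v) = M * ∑ u, ∑ v, w u v := by
    rw [sum_comm, mul_sum]
    refine sum_congr rfl fun u _ => ?_
    rw [sum_comm, mul_sum]
    refine sum_congr rfl fun v _ => ?_
    rw [← mul_sum, hpair]
    split_ifs with huv
    · simp [huv, hw]
    · ring
  have hunweighted : Fintype.card (Perm V) * ∑ x, ∑ y, F x y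
      = Fintype.card V * (Fintype.card V - 1) * M := by
    calc Fintype.card (Perm V) * ∑ x, ∑ y, F x y
        = ∑ σ : Perm V, ∑ u, ∑ v, F (σ u) (σ v) := by
          simp only [Equiv.sum_comp, Equiv.sum_comp _ (fun x => ∑ y, F x y), sum_const, card_univ,
            nsmul_eq_mul]
      _ = ∑ u, ∑ v, ∑ σ : Perm V, F (σ u) (σ v) := by
          rw [sum_comm]
          exact sum_congr rfl fun u _ => sum_comm
      _ = Fintype.card V * (Fintype.card V - 1) * M := by
          simp only [hpair, sum_ite, sum_const_zero, filter_ne, sum_const, mem_univ,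
            card_erase_of_mem, card_univ, nsmul_eq_mul, Nat.cast_sub hV.le, Nat.cast_one, zero_add]
          ring
  rw [hweighted]
  linear_combination (∑ u, ∑ v, w u v) * hunweighted.symm

lemma exists_perm_le_sum_sum_mul (hw : ∀ v, w v v = 0) (hF : ∀ v, F v v = 0)
    (hV : 1 < Fintype.card V) :
    ∃ σ : Perm V, (∑ u, ∑ v, w u v) * (∑ x, ∑ y, F x y) / (Fintype.card V * (Fintype.card V - 1))
      ≤ ∑ u, ∑ v, w u v * F (σ u) (σ v) := by
  have hn : (0 : ℝ) < Fintype.card V * (Fintype.card V - 1) := by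
    have : (1 : ℝ) < Fintype.card V := by exact_mod_cast hV
    nlinarith
  obtain ⟨σ, -, hσ⟩ := exists_le_of_sum_le (univ_nonempty (α := Perm V))
    (f := fun _ => (∑ u, ∑ v, w u v) * (∑ x, ∑ y, F x y) / (Fintype.card V * (Fintype.card V - 1)))
    (g := fun σ => ∑ u, ∑ v, w u v * F (σ u) (σ v)) (by
      rw [sum_const, card_univ, nsmul_eq_mul, mul_div_assoc', div_le_iff₀' hn,
        card_mul_sum_perm_sum_mul w F hw hF hV, mul_assoc])
  exact ⟨σ, hσ⟩

end Averaging

lemma sum_sq_le_sq_sum_div_card_add {ι : Type*} (s : Finset ι) (a : ι → ℝ) (m : ℝ)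
    (ha : ∀ i ∈ s, m ≤ a i ∧ a i ≤ m + 1) :
    ∑ i ∈ s, a i ^ 2 ≤ (∑ i ∈ s, a i) ^ 2 / #s + #s / 4 := by
  rcases s.eq_empty_or_nonempty with rfl | hs
  · simp
  have hpoint : ∀ i ∈ s, a i ^ 2 ≤ (2 * m + 1) * a i - m * (m + 1) := fun i hi => by
    nlinarith [ha i hi]
  have hK : (0 : ℝ) < #s := by exact_mod_cast hs.card_pos
  calc ∑ i ∈ s, a i ^ 2 ≤ ∑ i ∈ s, ((2 * m + 1) * a i - m * (m + 1)) := sum_le_sum hpoint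
    _ = (2 * m + 1) * ∑ i ∈ s, a i - #s * (m * (m + 1)) := by
        rw [sum_sub_distrib, ← mul_sum, sum_const, nsmul_eq_mul]
    _ ≤ (∑ i ∈ s, a i) ^ 2 / #s + #s / 4 := by
        rw [← sub_nonneg]
        have : (∑ i ∈ s, a i) ^ 2 / #s + #s / 4 - ((2 * m + 1) * ∑ i ∈ s, a i - #s * (m * (m + 1)))
            = (∑ i ∈ s, a i - #s * (m + 1 / 2)) ^ 2 / #s := by
          field_simp
          ring
        rw [this]
        positivity

section Colourings

variable {V : Type*} [Fintype V]

lemma exists_coloring_card_fiber_mem_Icc {k : ℕ} (hk : 0 < k) :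
    ∃ c : V → Fin k, ∀ i, #{v | c v = i} ∈ Icc (Fintype.card V / k) (Fintype.card V / k + 1) := by
  classical
  let e := Fintype.equivFin V
  refine ⟨fun v => ⟨e v % k, Nat.mod_lt _ hk⟩, fun i => ?_⟩
  have hcount : #{v | (⟨e v % k, Nat.mod_lt _ hk⟩ : Fin k) = i}
      = (Fintype.card V).count (· ≡ i [MOD k]) := by
    rw [Nat.count_eq_card_filter_range]
    refine card_nbij (fun v => e v) (fun v hv => ?_) (fun a _ b _ h => e.injective (Fin.ext h))
      (fun a ha => ?_)
    · simp_all [Fin.ext_iff, Nat.ModEq, Nat.mod_eq_of_lt i.2]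
    · simp only [coe_filter, mem_range, Set.mem_ofPred_eq] at ha
      refine ⟨e.symm ⟨a, ha.1⟩, ?_, by simp⟩
      simpa [Fin.ext_iff, Nat.ModEq, Nat.mod_eq_of_lt i.2] using ha.2
  rw [mem_Icc, hcount, Nat.count_modEq_card _ hk]
  split_ifs <;> omega

variable {κ : Type*} [Fintype κ] [DecidableEq κ] (c : V → κ)

lemma sum_sum_ite_eq_sq_sub_sum_card_fiber_sq :
    ∑ x, ∑ y, (if c x = c y then 0 else 1 : ℝ)
      = Fintype.card V ^ 2 - ∑ i, (#{v | c v = i} : ℝ) ^ 2 := by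
  have hrow : ∀ x, ∑ y, (if c x = c y then 0 else 1 : ℝ) = Fintype.card V - #{y | c y = c x} := by
    intro x
    have : ∀ y, (if c x = c y then 0 else 1 : ℝ) = 1 - if c y = c x then 1 else 0 := fun y => by
      split_ifs <;> simp_all
    simp_rw [this, sum_sub_distrib, sum_boole, sum_const, card_univ, nsmul_one]
  rw [sum_congr rfl fun x _ => hrow x, sum_sub_distrib,
    ← sum_fiberwise' univ c (fun j => (#{y | c y = j} : ℝ))]
  simp [sq]

lemma sq_sub_le_sum_sum_ite_of_card_fiber_mem_Icc (m : ℕ)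
    (hc : ∀ i, #{v | c v = i} ∈ Icc m (m + 1)) :
    (Fintype.card V : ℝ) ^ 2 - Fintype.card V ^ 2 / Fintype.card κ - Fintype.card κ / 4
      ≤ ∑ x, ∑ y, (if c x = c y then 0 else 1 : ℝ) := by
  have hsq := sum_sq_le_sq_sum_div_card_add univ (fun i => (#{v | c v = i} : ℝ)) m
    (fun i _ => by exact_mod_cast mem_Icc.1 (hc i))
  rw [← Nat.cast_sum, ← card_eq_sum_card_fiberwise (fun _ _ => mem_univ _), card_univ,
    card_univ] at hsq
  rw [sum_sum_ite_eq_sq_sub_sum_card_fiber_sq]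
  linarith

end Colourings

lemma kcutW_fiber {V : Type} [Fintype V] [DecidableEq V] {k : ℕ} (w : V → V → ℝ)
    (g : V → Fin k) :
    kcutW w (fun i => {x | g x = i}) = (∑ u, ∑ v, if g u = g v then 0 else w u v) / 2 := by
  unfold kcutW cutW
  congr 1
  calc ∑ i, ∑ j, (if i = j then 0 else ∑ u ∈ {x | g x = i}, ∑ v ∈ {x | g x = j}, w u v)
      = ∑ i, ∑ j, ∑ u ∈ {x | g x = i}, ∑ v ∈ {x | g x = j}, if i = j then 0 else w u v := by
        refine sum_congr rfl fun i _ => sum_congr rfl fun j _ => ?_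
        split_ifs <;> simp
    _ = ∑ i, ∑ u ∈ {x | g x = i}, ∑ j, ∑ v ∈ {x | g x = j}, if g u = g v then 0 else w u v := by
        refine sum_congr rfl fun i _ => ?_
        rw [sum_comm]
        refine sum_congr rfl fun u hu => sum_congr rfl fun j _ => sum_congr rfl fun v hv => ?_
        rw [(mem_filter.1 hu).2, (mem_filter.1 hv).2]
    _ = ∑ u, ∑ v, if g u = g v then 0 else w u v := by
        simp only [sum_fiberwise]

lemma isPartition_fiber {V : Type} {k : ℕ} [Fintype V] (g : V → Fin k)
    (hg : Function.Surjective g) : IsPartition (fun i => {x | g x = i}) := by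
  refine ⟨fun i => ?_, fun i j hij => disjoint_filter.2 fun x _ hi hj => hij (hi ▸ hj),
    fun v => ⟨g v, by simp⟩⟩
  obtain ⟨v, rfl⟩ := hg i
  exact ⟨v, by simp⟩

theorem stmt11_general (k : ℕ) (hk : 2 ≤ k) (V : Type) [Fintype V] [DecidableEq V]
    (hcard : k ≤ Fintype.card V) (w : V → V → ℝ)
    (hnn : ∀ u v, 0 ≤ w u v) (hdiag : ∀ v, w v v = 0) :
    ∃ X : Fin k → Finset V, IsPartition X ∧
      kcutW w X ≥ ((k : ℝ) - 1) / k * totalW w +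
        ((k : ℝ) - 1) / (2 * k) *
          (1 - ((k : ℝ) - 2) ^ 2 / (4 * ((Fintype.card V : ℝ) - 1) * ((k : ℝ) - 1))) *
          (2 * totalW w / (Fintype.card V : ℝ)) := by
  set n := Fintype.card V
  obtain ⟨c, hc⟩ := exists_coloring_card_fiber_mem_Icc (V := V) (by omega : 0 < k)
  have hq : 1 ≤ n / k := (Nat.one_le_div_iff (by omega)).2 hcard
  have hc_surj : Function.Surjective c := fun i => by
    obtain ⟨v, hv⟩ := card_pos.1 (hq.trans (mem_Icc.1 (hc i)).1)
    exact ⟨v, (mem_filter.1 hv).2⟩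
  let F : V → V → ℝ := fun x y => if c x = c y then 0 else 1
  have hF := sq_sub_le_sum_sum_ite_of_card_fiber_mem_Icc c _ hc
  rw [Fintype.card_fin] at hF
  obtain ⟨σ, hσ⟩ := exists_perm_le_sum_sum_mul w F hdiag (by simp [F]) (by omega)
  refine ⟨fun i => {x | c (σ x) = i}, isPartition_fiber _ (hc_surj.comp σ.surjective), ?_⟩
  have hW : ∑ u, ∑ v, w u v = 2 * totalW w := by unfold totalW; ring
  have hW0 : 0 ≤ totalW w :=
    div_nonneg (sum_nonneg fun u _ => sum_nonneg fun v _ => hnn u v) zero_le_two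
  have hk1 : (1 : ℝ) < k := by exact_mod_cast hk
  have hn1 : (1 : ℝ) < n := by exact_mod_cast (by omega : 1 < n)
  rw [ge_iff_le, kcutW_fiber]
  calc ((k : ℝ) - 1) / k * totalW w + ((k : ℝ) - 1) / (2 * k) *
          (1 - ((k : ℝ) - 2) ^ 2 / (4 * ((n : ℝ) - 1) * ((k : ℝ) - 1))) * (2 * totalW w / n)
      = 2 * totalW w * ((n : ℝ) ^ 2 - n ^ 2 / k - k / 4) / (n * (n - 1)) / 2 := by
        field_simp [(by linarith : (k : ℝ) - 1 ≠ 0), (by linarith : (n : ℝ) - 1 ≠ 0)]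
        ring
    _ ≤ (∑ u, ∑ v, w u v) * (∑ x, ∑ y, F x y) / (n * (n - 1)) / 2 := by
        rw [hW]
        gcongr
    _ ≤ (∑ u, ∑ v, w u v * F (σ u) (σ v)) / 2 := by gcongr
    _ = (∑ u, ∑ v, if c (σ u) = c (σ v) then 0 else w u v) / 2 := by
        simp [F, mul_ite]

theorem stmt11 (k : ℕ) (hk : 2 ≤ k) (hke : Even k) (V : Type) [Fintype V] [DecidableEq V]
    (hcard : k ≤ Fintype.card V) (w : V → V → ℝ)
    (hsym : ∀ u v, w u v = w v u) (hnn : ∀ u v, 0 ≤ w u v) (hdiag : ∀ v, w v v = 0) :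
    ∃ X : Fin k → Finset V, IsPartition X ∧
      kcutW w X ≥ ((k : ℝ) - 1) / k * totalW w +
        ((k : ℝ) - 1) / (2 * k) *
          (1 - ((k : ℝ) - 2) ^ 2 / (4 * ((Fintype.card V : ℝ) - 1) * ((k : ℝ) - 1))) *
          (2 * totalW w / (Fintype.card V : ℝ)) :=
  stmt11_general k hk V hcard w hnn hdiag
end
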